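/- arXiv:2001.08158 — 7 statements merged into one kernel-verified Lean document; each statement's English description precedes it below -/
import Mathlib

section
/- Let E be a strictly convex and reflexive Banach space, C a nonempty closed convex subset of E, and S a semigroup represented by self-maps T_s : C → C satisfying T_{st} = T_s ∘ T_t. If there exists a common attractive point a ∈ E for the representation (i.e. ‖a − T_s x‖ ≤ ‖a − x‖ for all s ∈ S and x ∈ C), then the representation has a common fixed point: there exists u ∈ C with T_s u = u for all s ∈ S. -/
/-!
In a reflexive space, bounded closed convex sets are weakly compact (Banach–Alaoglu in the
bidual) and `dist a` is weakly lower semicontinuous, so `a` has a nearest point `u` in `C`; strict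
convexity makes it unique. Each `T s` maps `C` into itself without increasing the distance to `a`,
so `T s u` is again a nearest point, hence equals `u`.
-/

open Metric NormedSpace

section

variable {E : Type*} [NormedAddCommGroup E] [NormedSpace ℝ E]

theorem Convex.isClosed_toWeakSpace_image {s : Set E} (hconv : Convex ℝ s)
    (hclosed : IsClosed s) : IsClosed (toWeakSpace ℝ E '' s) := by
  rw [← closure_eq_iff_isClosed, ← hconv.toWeakSpace_closure ℝ, hclosed.closure_eq]

theorem lowerSemicontinuous_dist_toWeakSpace_symm (a : E) :
    LowerSemicontinuous fun w : WeakSpace ℝ E ↦ dist a ((toWeakSpace ℝ E).symm w) := by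
  refine lowerSemicontinuous_iff_isClosed_preimage.2 fun r ↦ ?_
  have hball : (fun w : WeakSpace ℝ E ↦ dist a ((toWeakSpace ℝ E).symm w)) ⁻¹' Set.Iic r =
      toWeakSpace ℝ E '' closedBall a r := by
    rw [LinearEquiv.image_eq_preimage_symm]
    ext w
    simp [dist_comm]
  rw [hball]
  exact (convex_closedBall a r).isClosed_toWeakSpace_image isClosed_closedBall

theorem range_inclusionInDoubleDualWeak_eq_univ
    (hrefl : Function.Surjective (inclusionInDoubleDual ℝ E)) :
    Set.range (inclusionInDoubleDualWeak ℝ E) = Set.univ := by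
  refine Set.eq_univ_of_forall fun φ ↦ ?_
  obtain ⟨x, hx⟩ := hrefl (WeakDual.toStrongDual φ)
  exact ⟨toWeakSpace ℝ E x, DFunLike.ext _ _ fun f ↦ congrArg (· f) hx⟩

theorem isCompact_toWeakSpace_image_of_surjective_inclusionInDoubleDual
    (hrefl : Function.Surjective (inclusionInDoubleDual ℝ E)) {s : Set E}
    (hbdd : Bornology.IsBounded s) (hconv : Convex ℝ s) (hclosed : IsClosed s) :
    IsCompact (toWeakSpace ℝ E '' s) := by
  have := isCompact_closure_of_isBounded ℝ E (toWeakSpace ℝ E '' s)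
    (by rwa [(toWeakSpace ℝ E).injective.preimage_image])
    (by simp [range_inclusionInDoubleDualWeak_eq_univ hrefl])
  rwa [(hconv.isClosed_toWeakSpace_image hclosed).closure_eq] at this

theorem exists_isMinOn_dist_of_surjective_inclusionInDoubleDual
    (hrefl : Function.Surjective (inclusionInDoubleDual ℝ E)) {C : Set E} (hne : C.Nonempty)
    (hconv : Convex ℝ C) (hclosed : IsClosed C) (a : E) :
    ∃ u ∈ C, IsMinOn (dist a) C u := by
  obtain ⟨x₀, hx₀⟩ := hne
  set K := C ∩ closedBall a (dist a x₀)
  have hx₀K : K.Nonempty := ⟨x₀, hx₀, mem_closedBall'.2 le_rfl⟩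
  have hK : IsCompact (toWeakSpace ℝ E '' K) :=
    isCompact_toWeakSpace_image_of_surjective_inclusionInDoubleDual hrefl
      (isBounded_closedBall.subset Set.inter_subset_right) (hconv.inter (convex_closedBall _ _))
      (hclosed.inter isClosed_closedBall)
  obtain ⟨_, ⟨u, hu, rfl⟩, hmin⟩ :=
    LowerSemicontinuousOn.exists_isMinOn (hx₀K.image _) hK
      ((lowerSemicontinuous_dist_toWeakSpace_symm a).lowerSemicontinuousOn _)
  refine ⟨u, hu.1, fun x hx ↦ ?_⟩
  by_cases hxK : dist a x ≤ dist a x₀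
  · simpa using hmin ⟨x, ⟨hx, mem_closedBall'.2 hxK⟩, rfl⟩
  · exact (mem_closedBall'.1 hu.2).trans (le_of_not_ge hxK)

theorem Convex.eq_of_isMinOn_dist [StrictConvexSpace ℝ E] {C : Set E} (hconv : Convex ℝ C)
    {a u v : E} (hu : u ∈ C) (hv : v ∈ C) (hmin : IsMinOn (dist a) C u)
    (hvu : dist a v ≤ dist a u) : v = u := by
  by_contra hne
  have hmid := midpoint_mem_openSegment (𝕜 := ℝ) v u
  have hball := openSegment_subset_ball_of_ne (mem_closedBall'.2 hvu) (mem_closedBall'.2 le_rfl)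
    hne hmid
  exact (mem_ball'.1 hball).not_ge (hmin (hconv.openSegment_subset hv hu hmid))

end

theorem stmt3_general {E : Type*} [NormedAddCommGroup E] [NormedSpace ℝ E]
    [StrictConvexSpace ℝ E]
    (hrefl : Function.Surjective (NormedSpace.inclusionInDoubleDual ℝ E))
    (C : Set E) (hne : C.Nonempty) (hclosed : IsClosed C) (hconv : Convex ℝ C)
    (S : Type*) (T : S → E → E)
    (hmaps : ∀ s, ∀ x ∈ C, T s x ∈ C)
    (a : E) (hatt : ∀ s, ∀ x ∈ C, ‖a - T s x‖ ≤ ‖a - x‖) :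
    ∃ u ∈ C, ∀ s, T s u = u := by
  obtain ⟨u, hu, hmin⟩ :=
    exists_isMinOn_dist_of_surjective_inclusionInDoubleDual hrefl hne hconv hclosed a
  refine ⟨u, hu, fun s ↦ hconv.eq_of_isMinOn_dist hu (hmaps s u hu) hmin ?_⟩
  simpa only [dist_eq_norm] using hatt s u hu

theorem stmt3 {E : Type*} [NormedAddCommGroup E] [NormedSpace ℝ E] [CompleteSpace E]
    [StrictConvexSpace ℝ E]
    (hrefl : Function.Surjective (NormedSpace.inclusionInDoubleDual ℝ E))
    (C : Set E) (hne : C.Nonempty) (hclosed : IsClosed C) (hconv : Convex ℝ C)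
    (S : Type*) [Semigroup S] (T : S → E → E)
    (hmaps : ∀ s, ∀ x ∈ C, T s x ∈ C)
    (hrep : ∀ s t, ∀ x ∈ C, T (s * t) x = T s (T t x))
    (a : E) (hatt : ∀ s, ∀ x ∈ C, ‖a - T s x‖ ≤ ‖a - x‖) :
    ∃ u ∈ C, ∀ s, T s u = u :=
  stmt3_general hrefl C hne hclosed hconv S T hmaps a hatt
end

section
/- Let C be a nonempty subset of a Hilbert space H and let {T_s : s ∈ S} be a representation of a semigroup S on C. Then the set A_C(S) of attractive points (points a ∈ H with ‖a − T_s x‖ ≤ ‖a − x‖ for all s ∈ S, x ∈ C) is closed and convex. -/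
open RealInnerProductSpace

lemma halfspace_aux {H : Type*} [NormedAddCommGroup H] [InnerProductSpace ℝ H] (u v : H) :
    {a : H | ‖a - u‖ ≤ ‖a - v‖} = {a : H | ⟪v - u, a⟫ ≤ (‖v‖ ^ 2 - ‖u‖ ^ 2) / 2} := by
  ext a
  simp only [Set.mem_setOf_eq]
  have h1 : ‖a - u‖ ^ 2 = ‖a‖ ^ 2 - 2 * ⟪a, u⟫ + ‖u‖ ^ 2 := by
    rw [norm_sub_sq_real]
  have h2 : ‖a - v‖ ^ 2 = ‖a‖ ^ 2 - 2 * ⟪a, v⟫ + ‖v‖ ^ 2 := by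
    rw [norm_sub_sq_real]
  have h3 : ⟪v - u, a⟫ = ⟪a, v⟫ - ⟪a, u⟫ := by
    rw [inner_sub_left, real_inner_comm v a, real_inner_comm u a]
  constructor
  · intro h
    nlinarith [norm_nonneg (a - u), norm_nonneg (a - v)]
  · intro h
    nlinarith [norm_nonneg (a - u), norm_nonneg (a - v)]

theorem stmt6 {H : Type*} [NormedAddCommGroup H] [InnerProductSpace ℝ H] [CompleteSpace H]
    (C : Set H) (hne : C.Nonempty) (S : Type*) [Semigroup S] (T : S → H → H)
    (hmaps : ∀ s, ∀ x ∈ C, T s x ∈ C)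
    (hrep : ∀ s t, ∀ x ∈ C, T (s * t) x = T s (T t x)) :
    IsClosed {a : H | ∀ s, ∀ x ∈ C, ‖a - T s x‖ ≤ ‖a - x‖} ∧
      Convex ℝ {a : H | ∀ s, ∀ x ∈ C, ‖a - T s x‖ ≤ ‖a - x‖} := by
  have hset : {a : H | ∀ s, ∀ x ∈ C, ‖a - T s x‖ ≤ ‖a - x‖}
      = ⋂ s, ⋂ x ∈ C, {a : H | ‖a - T s x‖ ≤ ‖a - x‖} := by
    ext a; simp [Set.mem_iInter]
  rw [hset]
  constructor
  · refine isClosed_iInter fun s => isClosed_iInter fun x => isClosed_iInter fun _ => ?_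
    exact isClosed_le (by continuity) (by continuity)
  · refine convex_iInter fun s => convex_iInter fun x => convex_iInter fun _ => ?_
    rw [halfspace_aux]
    exact convex_halfSpace_le ⟨fun a b => inner_add_right _ _ _,
      fun c a => real_inner_smul_right _ _ _⟩ _
end

section
/- The mapping T : [0,1] → [0,1] defined by T(x) = √x for x ≠ 0 and T(0) = 1 satisfies: for all x, y ∈ [0,1], limsup_{n→∞} |Tⁿx − Tⁿy| ≤ |x − y|; yet there is no sequence (k_n) of reals with k_n → 1 and |Tⁿx − Tⁿy| ≤ k_n|x − y| for all x, y ∈ [0,1] and n. -/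
/-!
Every orbit of `T` converges to `1`: for `x > 0` the iterates are `x ^ (1/2)ⁿ`, and `0` is sent
to the fixed point `1`. Hence `|Tⁿx - Tⁿy| → 0` and the `limsup` is `0`. On the other hand a bound
`|T x - T y| ≤ k |x - y|` for the single step `n = 1` would make `T` continuous at `0` within
`[0,1]`, whereas `T x = √x → 0 ≠ 1 = T 0`.
-/

open Filter Topology Set

theorem continuousWithinAt_of_abs_sub_le_mul {f : ℝ → ℝ} {s : Set ℝ} {a k : ℝ}
    (hf : ∀ x ∈ s, |f x - f a| ≤ k * |x - a|) : ContinuousWithinAt f s a := by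
  have hbound : Tendsto (fun x => k * |x - a|) (𝓝[s] a) (𝓝 0) := by
    have : Tendsto (fun x => k * |x - a|) (𝓝 a) (𝓝 (k * |a - a|)) :=
      Continuous.tendsto (by fun_prop) a
    simpa using this.mono_left nhdsWithin_le_nhds
  rw [ContinuousWithinAt, tendsto_iff_norm_sub_tendsto_zero]
  exact squeeze_zero' (Eventually.of_forall fun _ => norm_nonneg _)
    (eventually_nhdsWithin_of_forall hf) hbound

section SqrtMap

variable {T : ℝ → ℝ} (hT : ∀ x, T x = if x = 0 then 1 else Real.sqrt x)
include hT

theorem apply_zero_eq_one : T 0 = 1 := by simp [hT]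

theorem iterate_eq_rpow_of_pos {x : ℝ} (hx : 0 < x) (n : ℕ) :
    T^[n] x = x ^ ((1 / 2 : ℝ) ^ n) := by
  induction n with
  | zero => simp
  | succ n ih =>
    rw [Function.iterate_succ_apply', ih, hT, if_neg (Real.rpow_pos_of_pos hx _).ne',
      Real.sqrt_eq_rpow, ← Real.rpow_mul hx.le, pow_succ]

theorem tendsto_iterate_one {x : ℝ} (hx : 0 ≤ x) :
    Tendsto (fun n => T^[n] x) atTop (𝓝 1) := by
  rcases hx.eq_or_lt with rfl | hx
  · rw [← tendsto_add_atTop_iff_nat 1]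
    simp only [Function.iterate_succ_apply, apply_zero_eq_one hT,
      iterate_eq_rpow_of_pos hT one_pos, Real.one_rpow, tendsto_const_nhds]
  · have hexp : Tendsto (fun n : ℕ => (1 / 2 : ℝ) ^ n) atTop (𝓝 0) :=
      tendsto_pow_atTop_nhds_zero_of_lt_one (by norm_num) (by norm_num)
    have := (Real.continuousAt_const_rpow hx.ne').tendsto.comp hexp
    rw [Real.rpow_zero] at this
    exact this.congr fun n => (iterate_eq_rpow_of_pos hT hx n).symm

theorem not_continuousWithinAt_zero : ¬ ContinuousWithinAt T (Icc 0 1) 0 := by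
  intro hcont
  have := left_nhdsWithin_Ioo_neBot (zero_lt_one' ℝ)
  have hto1 : Tendsto T (𝓝[Ioo 0 1] 0) (𝓝 1) := by
    simpa only [ContinuousWithinAt, apply_zero_eq_one hT] using hcont.mono Ioo_subset_Icc_self
  have hto0 : Tendsto T (𝓝[Ioo 0 1] 0) (𝓝 0) := by
    have hsqrt := (Real.continuous_sqrt.tendsto 0).mono_left (nhdsWithin_le_nhds (s := Ioo 0 1))
    rw [Real.sqrt_zero] at hsqrt
    refine hsqrt.congr' (eventually_nhdsWithin_of_forall fun x hx => ?_)
    rw [hT, if_neg hx.1.ne']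
  exact one_ne_zero (tendsto_nhds_unique hto1 hto0)

end SqrtMap

theorem stmt10 (T : ℝ → ℝ)
    (hT : ∀ x, T x = if x = 0 then 1 else Real.sqrt x) :
    (∀ x ∈ Set.Icc (0 : ℝ) 1, ∀ y ∈ Set.Icc (0 : ℝ) 1,
      Filter.limsup (fun n => |T^[n] x - T^[n] y|) Filter.atTop ≤ |x - y|) ∧
    ¬ ∃ k : ℕ → ℝ, Filter.Tendsto k Filter.atTop (nhds 1) ∧
      ∀ n : ℕ, ∀ x ∈ Set.Icc (0 : ℝ) 1, ∀ y ∈ Set.Icc (0 : ℝ) 1,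
        |T^[n] x - T^[n] y| ≤ k n * |x - y| := by
  constructor
  · intro x hx y hy
    have hdist : Tendsto (fun n => |T^[n] x - T^[n] y|) atTop (𝓝 0) := by
      simpa using ((tendsto_iterate_one hT hx.1).sub (tendsto_iterate_one hT hy.1)).abs
    rw [hdist.limsup_eq]
    exact abs_nonneg _
  · rintro ⟨k, -, hk⟩
    refine not_continuousWithinAt_zero hT (continuousWithinAt_of_abs_sub_le_mul (k := k 1) ?_)
    intro x hx
    simpa using hk 1 x hx 0 (left_mem_Icc.2 zero_le_one)
end

section
/- Let H be a Hilbert space, C ⊆ H nonempty, S a semigroup, and {T_s : s ∈ S} a representation of S on C. Suppose μ is a left invariant mean on a left-translation-invariant closed subspace X of ℓ∞(S) containing constants, c ∈ C has bounded orbit {T_s c : s ∈ S}, the function s ↦ ⟨T_s c, y⟩ belongs to X for every y ∈ H, and a ∈ H satisfies ⟨a, y⟩ = μ(s ↦ ⟨T_s c, y⟩) for all y ∈ H. If each T_s is nonexpansive, then a is an attractive point: ‖a − T_t x‖ ≤ ‖a − x‖ for all t ∈ S and x ∈ C. -/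
/-!
The function `s ↦ ‖T_s c‖²` need not lie in `X`, so the mean cannot be applied to the
identity `‖a − T_t x‖² − ‖a − x‖² = μ_s(‖T_{ts}c − T_t x‖² − ‖T_s c − x‖²)` directly. Only the
cross terms `f(s) = ⟪T_s c, x⟫ − ⟪T_{ts} c, T_t x⟫` are in `X`, with `μ f = ⟪a, x⟫ − ⟪a, T_t x⟫`,
and nonexpansiveness bounds `f` by the constant `(‖x‖² − ‖T_t x‖²)/2` plus the coboundary
`q − q ∘ ℓ_t` of the bounded function `q(s) = ‖T_s c‖²/2`. Averaging `n` left translates of this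
bound, which a left invariant mean does not see, makes the coboundary contribute `O(1/n)`;
hence `μ f ≤ (‖x‖² − ‖T_t x‖²)/2`, which is the claim after expanding the squares.
-/

open Finset

section Mean

variable {S : Type*} {X : Submodule ℝ (S → ℝ)} {μ : (S → ℝ) → ℝ}

structure IsMean (X : Submodule ℝ (S → ℝ)) (μ : (S → ℝ) → ℝ) : Prop where
  map_add : ∀ f ∈ X, ∀ g ∈ X, μ (f + g) = μ f + μ g
  map_smul : ∀ (r : ℝ), ∀ f ∈ X, μ (r • f) = r * μ f
  map_one : μ (fun _ => 1) = 1
  abs_map_le : ∀ f ∈ X, ∀ M : ℝ, (∀ s, |f s| ≤ M) → |μ f| ≤ M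

namespace IsMean

theorem map_zero (hμ : IsMean X μ) : μ 0 = 0 := by
  have h := hμ.map_add 0 X.zero_mem 0 X.zero_mem
  rw [add_zero] at h
  linarith

theorem map_sub (hμ : IsMean X μ) {f g : S → ℝ} (hf : f ∈ X) (hg : g ∈ X) :
    μ (f - g) = μ f - μ g := by
  have h := hμ.map_add _ (X.sub_mem hf hg) g hg
  rw [sub_add_cancel] at h
  linarith

theorem map_sum (hμ : IsMean X μ) {ι : Type*} (s : Finset ι) {g : ι → S → ℝ}
    (hg : ∀ i ∈ s, g i ∈ X) : μ (∑ i ∈ s, g i) = ∑ i ∈ s, μ (g i) := by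
  induction s using Finset.cons_induction with
  | empty => simpa using hμ.map_zero
  | cons i s hi ih =>
    rw [sum_cons, sum_cons, hμ.map_add _ (hg i (mem_cons_self i s)) _
      (X.sum_mem fun j hj => hg j (mem_cons_of_mem hj)),
      ih fun j hj => hg j (mem_cons_of_mem hj)]

theorem map_const (hμ : IsMean X μ) (hXconst : ∀ r : ℝ, (fun _ : S => r) ∈ X) (r : ℝ) :
    μ (fun _ => r) = r := by
  have hr : (r • fun _ : S => (1 : ℝ)) = fun _ => r := by
    ext
    simp
  rw [← hr, hμ.map_smul r _ (hXconst 1), hμ.map_one, mul_one]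

theorem le_of_forall_le (hμ : IsMean X μ) (hXbdd : ∀ f ∈ X, ∃ M : ℝ, ∀ s, |f s| ≤ M)
    (hXconst : ∀ r : ℝ, (fun _ : S => r) ∈ X) {g : S → ℝ} (hg : g ∈ X) {A : ℝ}
    (hA : ∀ s, g s ≤ A) : μ g ≤ A := by
  obtain ⟨B, hB⟩ := hXbdd g hg
  -- `g` takes values in `[-B, A]`, the ball of radius `(A + B)/2` around `(A - B)/2`.
  have hcentered : ∀ s, |g s - (A - B) / 2| ≤ (A + B) / 2 := fun s => by
    have := (abs_le.mp (hB s)).1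
    rw [abs_le]
    constructor <;> linarith [hA s]
  have h := (abs_le.mp (hμ.abs_map_le _ (X.sub_mem hg (hXconst _)) _ hcentered)).2
  rw [hμ.map_sub hg (hXconst _), hμ.map_const hXconst] at h
  linarith

end IsMean

variable [Semigroup S]

theorem comp_iterate_mul_left_mem (hXinv : ∀ f ∈ X, ∀ t : S, (fun s => f (t * s)) ∈ X)
    {f : S → ℝ} (hf : f ∈ X) (t : S) (k : ℕ) : f ∘ (t * ·)^[k] ∈ X := by
  induction k with
  | zero => exact hf
  | succ k ih => exact hXinv _ ih t

theorem map_comp_iterate_mul_left (hXinv : ∀ f ∈ X, ∀ t : S, (fun s => f (t * s)) ∈ X)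
    (hinv : ∀ f ∈ X, ∀ t : S, μ (fun s => f (t * s)) = μ f)
    {f : S → ℝ} (hf : f ∈ X) (t : S) (k : ℕ) : μ (f ∘ (t * ·)^[k]) = μ f := by
  induction k with
  | zero => rfl
  | succ k ih =>
    exact (hinv _ (comp_iterate_mul_left_mem hXinv hf t k) t).trans ih

theorem IsMean.le_of_le_add_sub_comp_mul_left (hμ : IsMean X μ)
    (hXbdd : ∀ f ∈ X, ∃ M : ℝ, ∀ s, |f s| ≤ M) (hXconst : ∀ r : ℝ, (fun _ : S => r) ∈ X)
    (hXinv : ∀ f ∈ X, ∀ t : S, (fun s => f (t * s)) ∈ X)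
    (hinv : ∀ f ∈ X, ∀ t : S, μ (fun s => f (t * s)) = μ f)
    {f q : S → ℝ} {B K : ℝ} {t : S} (hf : f ∈ X) (hq : ∀ s, |q s| ≤ B)
    (hfq : ∀ s, f s ≤ K + q s - q (t * s)) : μ f ≤ K := by
  have hmem := comp_iterate_mul_left_mem hXinv hf t
  have hsum_le : ∀ (n : ℕ) s, (∑ k ∈ range n, f ∘ (t * ·)^[k]) s ≤ n * K + 2 * B := by
    intro n s
    have htele : ∑ k ∈ range n, (K + (q ((t * ·)^[k] s) - q ((t * ·)^[k + 1] s)))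
        = n * K + (q s - q ((t * ·)^[n] s)) := by
      rw [sum_add_distrib, sum_range_sub']
      simp
    calc (∑ k ∈ range n, f ∘ (t * ·)^[k]) s
        ≤ ∑ k ∈ range n, (K + (q ((t * ·)^[k] s) - q ((t * ·)^[k + 1] s))) := by
          rw [Finset.sum_apply]
          refine sum_le_sum fun k _ => ?_
          rw [Function.comp_apply, Function.iterate_succ_apply']
          linarith [hfq ((t * ·)^[k] s)]
      _ ≤ n * K + 2 * B := by
          rw [htele]
          linarith [(abs_le.mp (hq s)).2, (abs_le.mp (hq ((t * ·)^[n] s))).1]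
  have hn : ∀ n : ℕ, n * μ f ≤ n * K + 2 * B := fun n => by
    have h := hμ.le_of_forall_le hXbdd hXconst (X.sum_mem fun k _ => hmem k) (hsum_le n)
    rwa [hμ.map_sum _ fun k _ => hmem k,
      sum_congr rfl fun k _ => map_comp_iterate_mul_left hXinv hinv hf t k,
      sum_const, card_range, nsmul_eq_mul] at h
  by_contra! hlt
  obtain ⟨n, hn'⟩ := exists_nat_gt (2 * B / (μ f - K))
  rw [div_lt_iff₀ (sub_pos.mpr hlt)] at hn'
  linarith [hn n]

end Mean

theorem two_mul_inner_sub_inner_le_of_norm_sub_le {H : Type*} [NormedAddCommGroup H]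
    [InnerProductSpace ℝ H] {u v u' v' : H} (h : ‖u' - v'‖ ≤ ‖u - v‖) :
    2 * (inner ℝ u v - inner ℝ u' v') ≤ ‖u‖ ^ 2 - ‖u'‖ ^ 2 + (‖v‖ ^ 2 - ‖v'‖ ^ 2) := by
  have h2 := pow_le_pow_left₀ (norm_nonneg _) h 2
  rw [norm_sub_sq_real, norm_sub_sq_real] at h2
  linarith

theorem stmt15_general {H : Type*} [NormedAddCommGroup H] [InnerProductSpace ℝ H]
    (C : Set H)
    (S : Type*) [Semigroup S] (T : S → H → H)
    (hmaps : ∀ s, ∀ x ∈ C, T s x ∈ C)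
    (hrep : ∀ s t, ∀ x ∈ C, T (s * t) x = T s (T t x))
    (hnonexp : ∀ s, ∀ x ∈ C, ∀ y ∈ C, ‖T s x - T s y‖ ≤ ‖x - y‖)
    -- X : a left-translation-invariant closed subspace of ℓ∞(S) containing constants
    (X : Submodule ℝ (S → ℝ))
    (hXbdd : ∀ f ∈ X, ∃ M : ℝ, ∀ s, |f s| ≤ M)
    (hXconst : ∀ r : ℝ, (fun _ : S => r) ∈ X)
    (hXinv : ∀ f ∈ X, ∀ t : S, (fun s => f (t * s)) ∈ X)
    -- μ : a left invariant mean on X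
    (μ : (S → ℝ) → ℝ)
    (hadd : ∀ f ∈ X, ∀ g ∈ X, μ (f + g) = μ f + μ g)
    (hsmul : ∀ (r : ℝ), ∀ f ∈ X, μ (r • f) = r * μ f)
    (hone : μ (fun _ : S => (1 : ℝ)) = 1)
    (hnorm : ∀ f ∈ X, ∀ M : ℝ, (∀ s, |f s| ≤ M) → |μ f| ≤ M)
    (hinv : ∀ f ∈ X, ∀ t : S, μ (fun s => f (t * s)) = μ f)
    -- c : a point of C with bounded orbit whose matrix coefficients lie in X
    (c : H) (hc : c ∈ C) (hbdd : ∃ M, ∀ s, ‖T s c‖ ≤ M)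
    (hmem : ∀ y : H, (fun s => (inner ℝ (T s c) y : ℝ)) ∈ X)
    -- a : the barycenter T_μ c
    (a : H) (ha : ∀ y : H, (inner ℝ a y : ℝ) = μ (fun s => (inner ℝ (T s c) y : ℝ))) :
    ∀ t : S, ∀ x ∈ C, ‖a - T t x‖ ≤ ‖a - x‖ := by
  intro t x hx
  obtain ⟨M, hM⟩ := hbdd
  have hμ : IsMean X μ := ⟨hadd, hsmul, hone, hnorm⟩
  have hshift := hXinv _ (hmem (T t x)) t
  have hμf : μ ((fun s => inner ℝ (T s c) x) - fun s => inner ℝ (T (t * s) c) (T t x))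
      = inner ℝ a x - inner ℝ a (T t x) := by
    rw [hμ.map_sub (hmem x) hshift, hinv _ (hmem _) t, ha, ha]
  have hq : ∀ s, |‖T s c‖ ^ 2 / 2| ≤ M ^ 2 / 2 := fun s => by
    rw [abs_of_nonneg (by positivity)]
    gcongr
    exact hM s
  have hfq : ∀ s, inner ℝ (T s c) x - inner ℝ (T (t * s) c) (T t x)
      ≤ (‖x‖ ^ 2 - ‖T t x‖ ^ 2) / 2 + ‖T s c‖ ^ 2 / 2 - ‖T (t * s) c‖ ^ 2 / 2 := fun s => by
    have hle : ‖T (t * s) c - T t x‖ ≤ ‖T s c - x‖ := by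
      rw [hrep t s c hc]
      exact hnonexp t _ (hmaps s c hc) x hx
    linarith [two_mul_inner_sub_inner_le_of_norm_sub_le hle]
  have hK := hμ.le_of_le_add_sub_comp_mul_left hXbdd hXconst hXinv hinv
    (X.sub_mem (hmem x) hshift) hq hfq
  rw [hμf] at hK
  refine le_of_sq_le_sq ?_ (norm_nonneg _)
  rw [norm_sub_sq_real, norm_sub_sq_real]
  linarith

theorem stmt15 {H : Type*} [NormedAddCommGroup H] [InnerProductSpace ℝ H] [CompleteSpace H]
    (C : Set H) (hCne : C.Nonempty)
    (S : Type*) [Semigroup S] (T : S → H → H)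
    (hmaps : ∀ s, ∀ x ∈ C, T s x ∈ C)
    (hrep : ∀ s t, ∀ x ∈ C, T (s * t) x = T s (T t x))
    (hnonexp : ∀ s, ∀ x ∈ C, ∀ y ∈ C, ‖T s x - T s y‖ ≤ ‖x - y‖)
    -- X : a left-translation-invariant closed subspace of ℓ∞(S) containing constants
    (X : Submodule ℝ (S → ℝ))
    (hXbdd : ∀ f ∈ X, ∃ M : ℝ, ∀ s, |f s| ≤ M)
    (hXconst : ∀ r : ℝ, (fun _ : S => r) ∈ X)
    (hXinv : ∀ f ∈ X, ∀ t : S, (fun s => f (t * s)) ∈ X)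
    (hXclosed : ∀ f : S → ℝ, (∀ ε > 0, ∃ g ∈ X, ∀ s, |f s - g s| ≤ ε) → f ∈ X)
    -- μ : a left invariant mean on X
    (μ : (S → ℝ) → ℝ)
    (hadd : ∀ f ∈ X, ∀ g ∈ X, μ (f + g) = μ f + μ g)
    (hsmul : ∀ (r : ℝ), ∀ f ∈ X, μ (r • f) = r * μ f)
    (hone : μ (fun _ : S => (1 : ℝ)) = 1)
    (hnorm : ∀ f ∈ X, ∀ M : ℝ, (∀ s, |f s| ≤ M) → |μ f| ≤ M)
    (hinv : ∀ f ∈ X, ∀ t : S, μ (fun s => f (t * s)) = μ f)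
    -- c : a point of C with bounded orbit whose matrix coefficients lie in X
    (c : H) (hc : c ∈ C) (hbdd : ∃ M, ∀ s, ‖T s c‖ ≤ M)
    (hmem : ∀ y : H, (fun s => (inner ℝ (T s c) y : ℝ)) ∈ X)
    -- a : the barycenter T_μ c
    (a : H) (ha : ∀ y : H, (inner ℝ a y : ℝ) = μ (fun s => (inner ℝ (T s c) y : ℝ))) :
    ∀ t : S, ∀ x ∈ C, ‖a - T t x‖ ≤ ‖a - x‖ :=
  stmt15_general C S T hmaps hrep hnonexp X hXbdd hXconst hXinv μ hadd hsmul hone hnorm hinv c hc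
    hbdd hmem a ha
end

section
/- Let H be a Hilbert space, C ⊆ H nonempty, S a semigroup generated by a subset Λ, and {T_s : s ∈ S} a representation of S on C such that for each t ∈ Λ there exist α, β ∈ ℝ with α‖T_t x − T_t y‖² + (1−α)‖x − T_t y‖² ≤ β‖T_t x − y‖² + (1−β)‖x − y‖² for all x, y ∈ C. Suppose μ is a left invariant mean on a suitable subspace X of ℓ∞(S), c ∈ C has bounded orbit, s ↦ ⟨T_s c, y⟩ ∈ X for each y ∈ H, and a ∈ H satisfies ⟨a, y⟩ = μ(s ↦ ⟨T_s c, y⟩) for all y. Then ‖a − T_t x‖ ≤ ‖a − x‖ for all t ∈ S and x ∈ C. -/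
/-!
Fix a generator `t` and `x ∈ C`, and put `z = T_t x`. Expanding the generalized hybrid inequality
at the pair `(T_s c, x)` gives `g (t s) - g s ≤ f s` for all `s`, where `g s = (α - β) ‖T_s c‖²`
is bounded and `f` is a combination of matrix coefficients of the orbit of `c` whose mean is
`‖a - x‖² - ‖a - z‖²`. Averaging `f` along `s, t s, t² s, …` telescopes the left-hand side, so
`N • μ f` is bounded below uniformly in `N`, which forces `μ f ≥ 0`. Attractive points are
preserved under composition, so the inequality passes from the generators to all of `S`.
-/

open Finset

section Mean

variable {S : Type*} [Semigroup S]

structure IsLeftInvariantMean (X : Submodule ℝ (S → ℝ)) (μ : (S → ℝ) → ℝ) : Prop where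
  exists_bound : ∀ f ∈ X, ∃ M : ℝ, ∀ s, |f s| ≤ M
  const_mem : ∀ r : ℝ, (fun _ : S => r) ∈ X
  comp_mul_left_mem : ∀ f ∈ X, ∀ t : S, (fun s => f (t * s)) ∈ X
  map_add : ∀ f ∈ X, ∀ g ∈ X, μ (f + g) = μ f + μ g
  map_smul : ∀ (r : ℝ), ∀ f ∈ X, μ (r • f) = r * μ f
  map_one : μ (fun _ : S => (1 : ℝ)) = 1
  abs_map_le : ∀ f ∈ X, ∀ M : ℝ, (∀ s, |f s| ≤ M) → |μ f| ≤ M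
  map_comp_mul_left : ∀ f ∈ X, ∀ t : S, μ (fun s => f (t * s)) = μ f

namespace IsLeftInvariantMean

variable {X : Submodule ℝ (S → ℝ)} {μ : (S → ℝ) → ℝ}

theorem map_const (hμ : IsLeftInvariantMean X μ) (r : ℝ) : μ (fun _ : S => r) = r := by
  have : (fun _ : S => r) = r • fun _ : S => (1 : ℝ) := by ext; simp
  rw [this, hμ.map_smul r _ (hμ.const_mem 1), hμ.map_one, mul_one]

theorem le_map_of_forall_le (hμ : IsLeftInvariantMean X μ) {f : S → ℝ} (hf : f ∈ X) {r : ℝ}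
    (hr : ∀ s, r ≤ f s) : r ≤ μ f := by
  obtain ⟨M, hM⟩ := hμ.exists_bound f hf
  -- `f` takes values in `[r, max M r]`; centre it and use `|μ| ≤ sup`.
  have hcentred : |μ (f + fun _ => -((r + max M r) / 2))| ≤ (max M r - r) / 2 := by
    refine hμ.abs_map_le _ (X.add_mem hf (hμ.const_mem _)) _ fun s => abs_le.mpr ⟨?_, ?_⟩
    · simp only [Pi.add_apply]; linarith [hr s]
    · simp only [Pi.add_apply]; linarith [(abs_le.mp (hM s)).2, le_max_left M r]
  rw [hμ.map_add _ hf _ (hμ.const_mem _), hμ.map_const] at hcentred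
  linarith [(abs_le.mp hcentred).1]

theorem map_sum (hμ : IsLeftInvariantMean X μ) {ι : Type*} (I : Finset ι) {f : ι → S → ℝ}
    (hf : ∀ i ∈ I, f i ∈ X) : μ (∑ i ∈ I, f i) = ∑ i ∈ I, μ (f i) := by
  classical
  induction I using Finset.induction_on with
  | empty => simp only [sum_empty]; exact hμ.map_const 0
  | insert i I hi ih =>
    rw [sum_insert hi, sum_insert hi, hμ.map_add _ (hf i (mem_insert_self i I)) _
      (X.sum_mem fun j hj => hf j (mem_insert_of_mem hj)),
      ih fun j hj => hf j (mem_insert_of_mem hj)]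

theorem comp_iterate_mul_left_mem (hμ : IsLeftInvariantMean X μ) {f : S → ℝ} (hf : f ∈ X)
    (t : S) (n : ℕ) : (fun s => f ((t * ·)^[n] s)) ∈ X := by
  induction n with
  | zero => exact hf
  | succ n ih => exact hμ.comp_mul_left_mem _ ih t

theorem map_comp_iterate_mul_left (hμ : IsLeftInvariantMean X μ) {f : S → ℝ} (hf : f ∈ X)
    (t : S) (n : ℕ) : μ (fun s => f ((t * ·)^[n] s)) = μ f := by
  induction n with
  | zero => rfl
  | succ n ih =>
    exact (hμ.map_comp_mul_left _ (hμ.comp_iterate_mul_left_mem hf t n) t).trans ih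

theorem map_nonneg_of_coboundary_le (hμ : IsLeftInvariantMean X μ) {f : S → ℝ} (hf : f ∈ X)
    {g : S → ℝ} {B : ℝ} (hg : ∀ s, |g s| ≤ B) (t : S) (hfg : ∀ s, g (t * s) - g s ≤ f s) :
    0 ≤ μ f := by
  set F : ℕ → S → ℝ := fun N => ∑ n ∈ range N, fun s => f ((t * ·)^[n] s)
  have hF_mem : ∀ N, F N ∈ X := fun N =>
    X.sum_mem fun n _ => hμ.comp_iterate_mul_left_mem hf t n
  have hF_map : ∀ N, μ (F N) = N * μ f := fun N => by
    rw [hμ.map_sum _ fun n _ => hμ.comp_iterate_mul_left_mem hf t n]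
    simp [hμ.map_comp_iterate_mul_left hf t]
  have hF_ge : ∀ N s, -(2 * B) ≤ F N s := fun N s => by
    have htelescope : g ((t * ·)^[N] s) - g s ≤ F N s :=
      calc g ((t * ·)^[N] s) - g s
          = ∑ n ∈ range N, (g ((t * ·)^[n + 1] s) - g ((t * ·)^[n] s)) :=
            (sum_range_sub (fun n => g ((t * ·)^[n] s)) N).symm
        _ ≤ ∑ n ∈ range N, f ((t * ·)^[n] s) := sum_le_sum fun n _ => by
            rw [Function.iterate_succ_apply']
            exact hfg _
        _ = F N s := by simp only [F, Finset.sum_apply]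
    linarith [(abs_le.mp (hg ((t * ·)^[N] s))).1, (abs_le.mp (hg s)).2]
  have hbound : ∀ N : ℕ, -(2 * B) ≤ N * μ f := fun N =>
    hF_map N ▸ hμ.le_map_of_forall_le (hF_mem N) (hF_ge N)
  by_contra! hneg
  obtain ⟨N, hN⟩ := exists_nat_gt (2 * B / -μ f)
  have := (div_lt_iff₀ (neg_pos.mpr hneg)).mp hN
  linarith [hbound N]

end IsLeftInvariantMean

end Mean

section Hilbert

variable {H : Type*} [NormedAddCommGroup H]

def IsGeneralizedHybrid (C : Set H) (F : H → H) : Prop :=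
  ∃ α β : ℝ, ∀ x ∈ C, ∀ y ∈ C,
    α * ‖F x - F y‖ ^ 2 + (1 - α) * ‖x - F y‖ ^ 2 ≤ β * ‖F x - y‖ ^ 2 + (1 - β) * ‖x - y‖ ^ 2

def IsAttractivePoint (C : Set H) (F : H → H) (a : H) : Prop :=
  ∀ x ∈ C, ‖a - F x‖ ≤ ‖a - x‖

theorem IsAttractivePoint.comp {C : Set H} {F G : H → H} {a : H} (hF : IsAttractivePoint C F a)
    (hG : IsAttractivePoint C G a) (hGC : ∀ x ∈ C, G x ∈ C) : IsAttractivePoint C (F ∘ G) a :=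
  fun x hx => (hF (G x) (hGC x hx)).trans (hG x hx)

variable [InnerProductSpace ℝ H]

/-- The generalized hybrid inequality at `(u, x)` with `v = F u`, `z = F x`, with the squared
norms expanded. -/
theorem generalizedHybrid_expand {u v x z : H} {α β : ℝ}
    (h : α * ‖v - z‖ ^ 2 + (1 - α) * ‖u - z‖ ^ 2 ≤ β * ‖v - x‖ ^ 2 + (1 - β) * ‖u - x‖ ^ 2) :
    (α - β) * ‖v‖ ^ 2 - (α - β) * ‖u‖ ^ 2 ≤
      ‖x‖ ^ 2 - ‖z‖ ^ 2 + inner ℝ v ((2 * α) • z - (2 * β) • x) +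
        inner ℝ u ((2 * (1 - α)) • z - (2 * (1 - β)) • x) := by
  simp only [norm_sub_sq_real, inner_sub_right, inner_smul_right] at h ⊢
  linarith

theorem norm_sub_sq_sub_norm_sub_sq (a x z : H) :
    ‖a - x‖ ^ 2 - ‖a - z‖ ^ 2 = ‖x‖ ^ 2 - ‖z‖ ^ 2 + inner ℝ a ((2 : ℝ) • z - (2 : ℝ) • x) := by
  simp only [norm_sub_sq_real, inner_sub_right, inner_smul_right]
  ring

variable {S : Type*} [Semigroup S] {X : Submodule ℝ (S → ℝ)} {μ : (S → ℝ) → ℝ}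
  {C : Set H} {T : S → H → H} {c a : H}

theorem isAttractivePoint_of_isGeneralizedHybrid (hμ : IsLeftInvariantMean X μ)
    (hmaps : ∀ s, ∀ x ∈ C, T s x ∈ C) (hc : c ∈ C) {M : ℝ} (hM : ∀ s, ‖T s c‖ ≤ M)
    (hmem : ∀ y : H, (fun s => inner ℝ (T s c) y) ∈ X)
    (ha : ∀ y : H, inner ℝ a y = μ (fun s => inner ℝ (T s c) y))
    {t : S} (ht : ∀ s, T t (T s c) = T (t * s) c) (hT : IsGeneralizedHybrid C (T t)) :
    IsAttractivePoint C (T t) a := by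
  obtain ⟨α, β, hαβ⟩ := hT
  intro x hx
  set z := T t x
  set w₁ := (2 * α) • z - (2 * β) • x
  set w₂ := (2 * (1 - α)) • z - (2 * (1 - β)) • x
  set f : S → ℝ := ((fun _ => ‖x‖ ^ 2 - ‖z‖ ^ 2) + fun s => inner ℝ (T (t * s) c) w₁) +
    fun s => inner ℝ (T s c) w₂
  have hw₁_mem := hμ.comp_mul_left_mem _ (hmem w₁) t
  have hf_mem : f ∈ X := X.add_mem (X.add_mem (hμ.const_mem _) hw₁_mem) (hmem w₂)
  have hf_map : μ f = ‖a - x‖ ^ 2 - ‖a - z‖ ^ 2 := by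
    rw [hμ.map_add _ (X.add_mem (hμ.const_mem _) hw₁_mem) _ (hmem w₂),
      hμ.map_add _ (hμ.const_mem _) _ hw₁_mem, hμ.map_const,
      hμ.map_comp_mul_left _ (hmem w₁), ← ha, ← ha, add_assoc, ← inner_add_right,
      norm_sub_sq_sub_norm_sub_sq]
    congr 2
    module
  have hg : ∀ s, |(α - β) * ‖T s c‖ ^ 2| ≤ |α - β| * M ^ 2 := fun s => by
    rw [abs_mul, abs_of_nonneg (sq_nonneg ‖T s c‖)]
    gcongr
    exact hM s
  have hcob : ∀ s, (α - β) * ‖T (t * s) c‖ ^ 2 - (α - β) * ‖T s c‖ ^ 2 ≤ f s := fun s => by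
    have := hαβ (T s c) (hmaps s c hc) x hx
    rw [ht] at this
    simpa only [f, Pi.add_apply] using generalizedHybrid_expand this
  have hsq := hμ.map_nonneg_of_coboundary_le hf_mem hg t hcob
  rw [hf_map, sub_nonneg] at hsq
  exact (sq_le_sq₀ (norm_nonneg _) (norm_nonneg _)).mp hsq

def attractiveSubsemigroup (C : Set H) (T : S → H → H) (a : H) (hmaps : ∀ s, ∀ x ∈ C, T s x ∈ C)
    (hrep : ∀ s t, ∀ x ∈ C, T (s * t) x = T s (T t x)) : Subsemigroup S where
  carrier := {u | IsAttractivePoint C (T u) a}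
  mul_mem' {u v} hu hv x hx := by
    rw [hrep u v x hx]
    exact (hu.comp hv (hmaps v)) x hx

end Hilbert

theorem stmt16_general {H : Type*} [NormedAddCommGroup H] [InnerProductSpace ℝ H]
    (C : Set H)
    (S : Type*) [Semigroup S] (T : S → H → H)
    (hmaps : ∀ s, ∀ x ∈ C, T s x ∈ C)
    (hrep : ∀ s t, ∀ x ∈ C, T (s * t) x = T s (T t x))
    -- Λ generates S, and each T_t (t ∈ Λ) is generalized hybrid
    (Λ : Set S) (hgen : Subsemigroup.closure Λ = ⊤)
    (hhybrid : ∀ t ∈ Λ, ∃ α β : ℝ, ∀ x ∈ C, ∀ y ∈ C,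
      α * ‖T t x - T t y‖ ^ 2 + (1 - α) * ‖x - T t y‖ ^ 2 ≤
        β * ‖T t x - y‖ ^ 2 + (1 - β) * ‖x - y‖ ^ 2)
    -- X : a left-translation-invariant closed subspace of ℓ∞(S) containing constants
    (X : Submodule ℝ (S → ℝ))
    (hXbdd : ∀ f ∈ X, ∃ M : ℝ, ∀ s, |f s| ≤ M)
    (hXconst : ∀ r : ℝ, (fun _ : S => r) ∈ X)
    (hXinv : ∀ f ∈ X, ∀ t : S, (fun s => f (t * s)) ∈ X)
    -- μ : a left invariant mean on X
    (μ : (S → ℝ) → ℝ)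
    (hadd : ∀ f ∈ X, ∀ g ∈ X, μ (f + g) = μ f + μ g)
    (hsmul : ∀ (r : ℝ), ∀ f ∈ X, μ (r • f) = r * μ f)
    (hone : μ (fun _ : S => (1 : ℝ)) = 1)
    (hnorm : ∀ f ∈ X, ∀ M : ℝ, (∀ s, |f s| ≤ M) → |μ f| ≤ M)
    (hinv : ∀ f ∈ X, ∀ t : S, μ (fun s => f (t * s)) = μ f)
    -- c : a point of C with bounded orbit whose matrix coefficients lie in X
    (c : H) (hc : c ∈ C) (hbdd : ∃ M, ∀ s, ‖T s c‖ ≤ M)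
    (hmem : ∀ y : H, (fun s => (inner ℝ (T s c) y : ℝ)) ∈ X)
    -- a : the barycenter T_μ c
    (a : H) (ha : ∀ y : H, (inner ℝ a y : ℝ) = μ (fun s => (inner ℝ (T s c) y : ℝ))) :
    ∀ t : S, ∀ x ∈ C, ‖a - T t x‖ ≤ ‖a - x‖ := by
  have hμ : IsLeftInvariantMean X μ := ⟨hXbdd, hXconst, hXinv, hadd, hsmul, hone, hnorm, hinv⟩
  obtain ⟨M, hM⟩ := hbdd
  have hgenerators : Λ ⊆ attractiveSubsemigroup C T a hmaps hrep := fun t ht =>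
    isAttractivePoint_of_isGeneralizedHybrid hμ hmaps hc hM hmem ha
      (fun s => (hrep t s c hc).symm) (hhybrid t ht)
  intro t
  exact Subsemigroup.closure_le.mpr hgenerators (hgen ▸ Subsemigroup.mem_top t)

theorem stmt16 {H : Type*} [NormedAddCommGroup H] [InnerProductSpace ℝ H] [CompleteSpace H]
    (C : Set H) (hCne : C.Nonempty)
    (S : Type*) [Semigroup S] (T : S → H → H)
    (hmaps : ∀ s, ∀ x ∈ C, T s x ∈ C)
    (hrep : ∀ s t, ∀ x ∈ C, T (s * t) x = T s (T t x))
    -- Λ generates S, and each T_t (t ∈ Λ) is generalized hybrid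
    (Λ : Set S) (hgen : Subsemigroup.closure Λ = ⊤)
    (hhybrid : ∀ t ∈ Λ, ∃ α β : ℝ, ∀ x ∈ C, ∀ y ∈ C,
      α * ‖T t x - T t y‖ ^ 2 + (1 - α) * ‖x - T t y‖ ^ 2 ≤
        β * ‖T t x - y‖ ^ 2 + (1 - β) * ‖x - y‖ ^ 2)
    -- X : a left-translation-invariant closed subspace of ℓ∞(S) containing constants
    (X : Submodule ℝ (S → ℝ))
    (hXbdd : ∀ f ∈ X, ∃ M : ℝ, ∀ s, |f s| ≤ M)
    (hXconst : ∀ r : ℝ, (fun _ : S => r) ∈ X)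
    (hXinv : ∀ f ∈ X, ∀ t : S, (fun s => f (t * s)) ∈ X)
    (hXclosed : ∀ f : S → ℝ, (∀ ε > 0, ∃ g ∈ X, ∀ s, |f s - g s| ≤ ε) → f ∈ X)
    -- μ : a left invariant mean on X
    (μ : (S → ℝ) → ℝ)
    (hadd : ∀ f ∈ X, ∀ g ∈ X, μ (f + g) = μ f + μ g)
    (hsmul : ∀ (r : ℝ), ∀ f ∈ X, μ (r • f) = r * μ f)
    (hone : μ (fun _ : S => (1 : ℝ)) = 1)
    (hnorm : ∀ f ∈ X, ∀ M : ℝ, (∀ s, |f s| ≤ M) → |μ f| ≤ M)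
    (hinv : ∀ f ∈ X, ∀ t : S, μ (fun s => f (t * s)) = μ f)
    -- c : a point of C with bounded orbit whose matrix coefficients lie in X
    (c : H) (hc : c ∈ C) (hbdd : ∃ M, ∀ s, ‖T s c‖ ≤ M)
    (hmem : ∀ y : H, (fun s => (inner ℝ (T s c) y : ℝ)) ∈ X)
    -- a : the barycenter T_μ c
    (a : H) (ha : ∀ y : H, (inner ℝ a y : ℝ) = μ (fun s => (inner ℝ (T s c) y : ℝ))) :
    ∀ t : S, ∀ x ∈ C, ‖a - T t x‖ ≤ ‖a - x‖ :=
  stmt16_general C S T hmaps hrep Λ hgen hhybrid X hXbdd hXconst hXinv μ hadd hsmul hone hnorm hinv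
    c hc hbdd hmem a ha
end

section
/- Let H be a Hilbert space, D ⊆ H nonempty closed convex with metric projection P : H → D, and let (y_i) be a net in H such that the net of real numbers ‖y_i − P(y_i)‖ is decreasing (along the net order) and for i ≥ j, ‖y_i − z‖ ≤ ‖y_j − z‖ for all z ∈ D. Then (P(y_i)) is a Cauchy net in H, satisfying ‖P(y_i) − P(y_j)‖² ≤ ‖y_j − P(y_j)‖² − ‖y_i − P(y_i)‖² for i ≥ j. -/
open scoped InnerProductSpace

theorem stmt17 {H : Type*} [NormedAddCommGroup H] [InnerProductSpace ℝ H] [CompleteSpace H]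
    (D : Set H) (hne : D.Nonempty) (hclosed : IsClosed D) (hconv : Convex ℝ D)
    (P : H → H) (hPmem : ∀ y, P y ∈ D)
    (hPnear : ∀ y, ∀ z ∈ D, ‖P y - y‖ ≤ ‖z - y‖)
    {ι : Type*} [Preorder ι] [Nonempty ι] [IsDirected ι (· ≤ ·)]
    (y : ι → H)
    (hdecr : ∀ i j, j ≤ i → ‖y i - P (y i)‖ ≤ ‖y j - P (y j)‖)
    (hmono : ∀ i j, j ≤ i → ∀ z ∈ D, ‖y i - z‖ ≤ ‖y j - z‖) :
    CauchySeq (fun i => P (y i)) ∧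
      ∀ i j, j ≤ i →
        ‖P (y i) - P (y j)‖ ^ 2 ≤ ‖y j - P (y j)‖ ^ 2 - ‖y i - P (y i)‖ ^ 2 := by
  -- key pointwise estimate: ‖P u - z‖² ≤ ‖u - z‖² - ‖u - P u‖²
  have key : ∀ u : H, ∀ z ∈ D, ‖P u - z‖ ^ 2 ≤ ‖u - z‖ ^ 2 - ‖u - P u‖ ^ 2 := by
    intro u z hz
    haveI : Nonempty D := ⟨⟨z, hz⟩⟩
    have hPu : P u ∈ D := hPmem u
    have hinf : ‖u - P u‖ = ⨅ w : D, ‖u - w‖ := by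
      apply le_antisymm
      · apply le_ciInf
        intro w
        have := hPnear u w w.2
        rwa [norm_sub_rev (P u) u, norm_sub_rev (w : H) u] at this
      · exact ciInf_le ⟨0, fun _ ⟨_, h⟩ => h ▸ norm_nonneg _⟩ (⟨P u, hPu⟩ : D)
    have hinner : ⟪u - P u, z - P u⟫_ℝ ≤ 0 :=
      ((norm_eq_iInf_iff_real_inner_le_zero hconv hPu).mp hinf) z hz
    have hexp : ‖u - z‖ ^ 2 =
        ‖u - P u‖ ^ 2 + 2 * ⟪u - P u, P u - z⟫_ℝ + ‖P u - z‖ ^ 2 := by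
      have : u - z = (u - P u) + (P u - z) := by abel
      rw [this, norm_add_sq_real]
    have hflip : ⟪u - P u, P u - z⟫_ℝ = -⟪u - P u, z - P u⟫_ℝ := by
      rw [← inner_neg_right]; congr 1; abel
    nlinarith [hinner, hexp, hflip]
  have main : ∀ i j, j ≤ i →
      ‖P (y i) - P (y j)‖ ^ 2 ≤ ‖y j - P (y j)‖ ^ 2 - ‖y i - P (y i)‖ ^ 2 := by
    intro i j hij
    have h1 := key (y i) (P (y j)) (hPmem (y j))
    have h2 : ‖y i - P (y j)‖ ≤ ‖y j - P (y j)‖ := hmono i j hij _ (hPmem (y j))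
    have h3 : ‖y i - P (y j)‖ ^ 2 ≤ ‖y j - P (y j)‖ ^ 2 :=
      pow_le_pow_left₀ (norm_nonneg _) h2 2
    linarith
  refine ⟨?_, main⟩
  -- Cauchy part
  set f : ι → ℝ := fun i => ‖y i - P (y i)‖ ^ 2 with hf
  have hbdd : BddBelow (Set.range f) := ⟨0, fun _ ⟨i, h⟩ => h ▸ by positivity⟩
  set L : ℝ := ⨅ i, f i with hL
  have hLle : ∀ i, L ≤ f i := fun i => ciInf_le hbdd i
  constructor
  · exact Filter.map_neBot
  · rw [Filter.prod_map_map_eq]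
    refine (Metric.uniformity_basis_dist.ge_iff).mpr ?_
    intro ε hε
    have hε9 : (0 : ℝ) < (ε / 3) ^ 2 := by positivity
    obtain ⟨N, hN⟩ : ∃ N, f N < L + (ε / 3) ^ 2 := by
      apply exists_lt_of_ciInf_lt
      rw [← hL]; linarith
    rw [Filter.mem_map, Filter.mem_prod_iff]
    refine ⟨Set.Ici N, Filter.Ici_mem_atTop N, Set.Ici N, Filter.Ici_mem_atTop N, ?_⟩
    rintro ⟨m, n⟩ ⟨hm, hn⟩
    obtain ⟨k, hkm, hkn⟩ := directed_of (· ≤ ·) m n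
    have est : ∀ a, N ≤ a → k ≥ a → ‖P (y k) - P (y a)‖ < ε / 3 := by
      intro a hNa hka
      have h1 : ‖P (y k) - P (y a)‖ ^ 2 ≤ f a - f k := main k a hka
      have h2 : f a ≤ f N := by
        have := hdecr a N hNa
        exact pow_le_pow_left₀ (norm_nonneg _) this 2
      have h3 : L ≤ f k := hLle k
      have h4 : ‖P (y k) - P (y a)‖ ^ 2 < (ε / 3) ^ 2 := by linarith
      nlinarith [h4, norm_nonneg (P (y k) - P (y a)), hε]
    have em := est m hm hkm
    have en := est n hn hkn
    have : dist (P (y m)) (P (y n)) ≤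
        ‖P (y k) - P (y m)‖ + ‖P (y k) - P (y n)‖ := by
      rw [dist_eq_norm]
      calc ‖P (y m) - P (y n)‖ = ‖-(P (y k) - P (y m)) + (P (y k) - P (y n))‖ := by
            congr 1; abel
        _ ≤ ‖-(P (y k) - P (y m))‖ + ‖P (y k) - P (y n)‖ := norm_add_le _ _
        _ = ‖P (y k) - P (y m)‖ + ‖P (y k) - P (y n)‖ := by rw [norm_neg]
    show dist (P (y m)) (P (y n)) < ε
    linarith
end

section
/- Let S be a discrete semigroup with the property that for every finite subset σ ⊆ S there exists s_σ ∈ S with s·s_σ = s_σ for all s ∈ σ. Let C be a weakly closed subset of a Banach space E and {T_s : s ∈ S} a representation of S on C by weak-weak continuous maps such that the orbit {T_s c : s ∈ S} of some c ∈ C is relatively weakly compact. Then there exists z ∈ C with T_s z = z for all s ∈ S. -/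
/-!
Choose, for every finite `σ ⊆ S`, an element `s_σ` absorbing `σ` from the left. The net
`σ ↦ T_{s_σ} c` lives in the compact orbit closure, so it has a cluster point `z`. For fixed `s`,
eventually `s ∈ σ`, and then `T_{s_σ} c` lies in the set `W_s` of orbit points fixed by `T_s`;
hence `z ∈ closure W_s`, and continuity of `T_s` on the orbit closure gives `T_s z = z`.
This is purely topological; the weak topology of `E` only enters through it being Hausdorff.
-/

open Set Filter Topology

theorem exists_fixedPoint_of_isCompact_closure_orbit {X S : Type*} [TopologicalSpace X]
    [T2Space X] [Semigroup S] (hS : ∀ σ : Finset S, ∃ s₀ : S, ∀ s ∈ σ, s * s₀ = s₀)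
    (T : S → X → X) (c : X) (hrep : ∀ s t, T (s * t) c = T s (T t c))
    (hcont : ∀ s, ContinuousOn (T s) (closure (range fun t => T t c)))
    (hK : IsCompact (closure (range fun t => T t c))) :
    ∃ z ∈ closure (range fun t => T t c), ∀ s, T s z = z := by
  choose s₀ hs₀ using hS
  obtain ⟨z, hzK, hz⟩ := hK.exists_mapClusterPt (f := atTop) (u := fun σ => T (s₀ σ) c)
    (tendsto_principal.2 (Eventually.of_forall fun σ => subset_closure (mem_range_self _)))
  refine ⟨z, hzK, fun s => ?_⟩
  set W := (fun t => T t c) '' {t | s * t = t}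
  have hzW : z ∈ closure W := mem_closure_iff_clusterPt.2 <| ClusterPt.mono hz <|
    le_principal_iff.2 <| mem_map.2 <| (eventually_ge_atTop {s}).mono fun σ hσ =>
      mem_image_of_mem (T · c) (hs₀ σ s (hσ (Finset.mem_singleton_self s)))
  have hfix : EqOn (T s) id W := by
    rintro _ ⟨t, hst, rfl⟩
    exact (hrep s t).symm.trans (congrArg (T · c) hst)
  exact hfix.of_subset_closure ((hcont s).mono inter_subset_right) continuousOn_id
    (subset_inter subset_closure ((image_subset_range _ _).trans subset_closure)) inter_subset_left
    ⟨hzW, hzK⟩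

theorem stmt18_general {E : Type*} [NormedAddCommGroup E] [NormedSpace ℝ E]
    (S : Type*) [Semigroup S]
    (hS : ∀ σ : Finset S, ∃ s₀ : S, ∀ s ∈ σ, s * s₀ = s₀)
    (C : Set E) (hwc : IsClosed (toWeakSpace ℝ E '' C))
    (T : S → E → E) (hmaps : ∀ s, ∀ x ∈ C, T s x ∈ C)
    (hrep : ∀ s t, ∀ x ∈ C, T (s * t) x = T s (T t x))
    (hcont : ∀ s, ContinuousOn
      (fun x : WeakSpace ℝ E => toWeakSpace ℝ E (T s ((toWeakSpace ℝ E).symm x)))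
      (toWeakSpace ℝ E '' C))
    (c : E) (hc : c ∈ C)
    (horbit : IsCompact (closure (toWeakSpace ℝ E '' {x : E | ∃ s, x = T s c}))) :
    ∃ z ∈ C, ∀ s, T s z = z := by
  set ι := toWeakSpace ℝ E
  set T' : S → WeakSpace ℝ E → WeakSpace ℝ E := fun s x => ι (T s (ι.symm x))
  have horbit_eq : (range fun t => T' t (ι c)) = ι '' {x : E | ∃ s, x = T s c} := by
    ext; simp [T', eq_comm]
  have hclosure : closure (range fun t => T' t (ι c)) ⊆ ι '' C := by
    rw [horbit_eq, hwc.closure_subset_iff]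
    rintro _ ⟨_, ⟨s, rfl⟩, rfl⟩
    exact mem_image_of_mem ι (hmaps s c hc)
  obtain ⟨z, hz, hfix⟩ := exists_fixedPoint_of_isCompact_closure_orbit hS T' (ι c)
    (fun s t => by simp [T', hrep s t c hc]) (fun s => (hcont s).mono hclosure)
    (horbit_eq ▸ horbit)
  obtain ⟨z, hzC, rfl⟩ := hclosure hz
  exact ⟨z, hzC, fun s => ι.injective (by simpa [T'] using hfix s)⟩

theorem stmt18 {E : Type*} [NormedAddCommGroup E] [NormedSpace ℝ E] [CompleteSpace E]
    (S : Type*) [Semigroup S]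
    (hS : ∀ σ : Finset S, ∃ s₀ : S, ∀ s ∈ σ, s * s₀ = s₀)
    (C : Set E) (hwc : IsClosed (toWeakSpace ℝ E '' C))
    (T : S → E → E) (hmaps : ∀ s, ∀ x ∈ C, T s x ∈ C)
    (hrep : ∀ s t, ∀ x ∈ C, T (s * t) x = T s (T t x))
    (hcont : ∀ s, ContinuousOn
      (fun x : WeakSpace ℝ E => toWeakSpace ℝ E (T s ((toWeakSpace ℝ E).symm x)))
      (toWeakSpace ℝ E '' C))
    (c : E) (hc : c ∈ C)
    (horbit : IsCompact (closure (toWeakSpace ℝ E '' {x : E | ∃ s, x = T s c}))) :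
    ∃ z ∈ C, ∀ s, T s z = z :=
  stmt18_general S hS C hwc T hmaps hrep hcont c hc horbit
end
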